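/- For every smooth ϱ : ℝ² → ℝ, the combination Φ₁₁ + 2Φ₁₂ of graph vector fields, where Φ₁₁ⁱ = Σ ε^{i i₂} ε^{j₁ j₂} ε^{k₁ k₂} (∂_{i₂}∂_{j₁}∂_{k₁}ϱ)(∂_{j₂}ϱ)(∂_{k₂}ϱ) and Φ₁₂ⁱ = Σ ε^{i i₂} ε^{j₁ j₂} ε^{k₁ k₂} (∂_{j₁}∂_{k₁}ϱ)(∂_{i₂}∂_{j₂}ϱ)(∂_{k₂}ϱ) (sums over i₂, j₁, j₂, k₁, k₂ ∈ {1,2}), equals the explicit vector field X with components X¹ = −2ϱ_y(ϱ_xy)² + 2ϱ_y ϱ_xx ϱ_yy + (ϱ_y)² ϱ_xxy − 2ϱ_x ϱ_y ϱ_xyy + (ϱ_x)² ϱ_yyy and X² = 2ϱ_x(ϱ_xy)² − 2ϱ_x ϱ_xx ϱ_yy − (ϱ_y)² ϱ_xxx + 2ϱ_x ϱ_y ϱ_xxy − (ϱ_x)² ϱ_xyy. (This X is the trivializing vector field X^{γ₃}_{2D} of the tetrahedral Kontsevich flow on ℝ², up to the normalization constant 1/8.) -/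

import Mathlib

/-- The partial derivative `∂/∂xⁱ` of a function on `ℝ² ≃ (Fin 2 → ℝ)`,
with `x = x¹ ↔ i = 0` and `y = x² ↔ i = 1`. -/
noncomputable def pd (i : Fin 2) (f : (Fin 2 → ℝ) → ℝ) : (Fin 2 → ℝ) → ℝ :=
  fun x => fderiv ℝ f x (Pi.single i 1)

/-- The two-index Levi-Civita symbol: `ε⁰¹ = 1 = −ε¹⁰`, `ε⁰⁰ = ε¹¹ = 0`
(indices `1, 2` of the paper are `0, 1` here). -/
def eps (i j : Fin 2) : ℝ := (j : ℝ) - (i : ℝ)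

/-- `φ(Γ₁₁^{2D})`, the graph vector field of the Kontsevich graph `[0,1;1,3;1,2]`:
`Φ₁₁ⁱ = Σ ε^{i i₂} ε^{j₁ j₂} ε^{k₁ k₂} (∂_{i₂}∂_{j₁}∂_{k₁}ϱ)(∂_{j₂}ϱ)(∂_{k₂}ϱ)`. -/
noncomputable def Phi11 (ϱ : (Fin 2 → ℝ) → ℝ) (i : Fin 2) (x : Fin 2 → ℝ) : ℝ :=
  ∑ i₂ : Fin 2, ∑ j₁ : Fin 2, ∑ j₂ : Fin 2, ∑ k₁ : Fin 2, ∑ k₂ : Fin 2,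
    eps i i₂ * eps j₁ j₂ * eps k₁ k₂ *
      (pd i₂ (pd j₁ (pd k₁ ϱ)) x * pd j₂ ϱ x * pd k₂ ϱ x)

/-- `φ(Γ₁₂^{2D})`, the graph vector field of the Kontsevich graph `[0,3;1,3;1,2]`:
`Φ₁₂ⁱ = Σ ε^{i i₂} ε^{j₁ j₂} ε^{k₁ k₂} (∂_{j₁}∂_{k₁}ϱ)(∂_{i₂}∂_{j₂}ϱ)(∂_{k₂}ϱ)`. -/
noncomputable def Phi12 (ϱ : (Fin 2 → ℝ) → ℝ) (i : Fin 2) (x : Fin 2 → ℝ) : ℝ :=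
  ∑ i₂ : Fin 2, ∑ j₁ : Fin 2, ∑ j₂ : Fin 2, ∑ k₁ : Fin 2, ∑ k₂ : Fin 2,
    eps i i₂ * eps j₁ j₂ * eps k₁ k₂ *
      (pd j₁ (pd k₁ ϱ) x * pd i₂ (pd j₂ ϱ) x * pd k₂ ϱ x)

lemma fderiv_smooth {f : (Fin 2 → ℝ) → ℝ} (hf : ContDiff ℝ (⊤ : ℕ∞) f) :
    ContDiff ℝ (⊤ : ℕ∞) (fderiv ℝ f) :=
  hf.fderiv_right (m := (⊤ : ℕ∞)) (by exact_mod_cast le_top)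

lemma pd_smooth {f : (Fin 2 → ℝ) → ℝ} (hf : ContDiff ℝ (⊤ : ℕ∞) f) (i : Fin 2) :
    ContDiff ℝ (⊤ : ℕ∞) (pd i f) :=
  (fderiv_smooth hf).clm_apply contDiff_const

lemma pd_comm {f : (Fin 2 → ℝ) → ℝ} (hf : ContDiff ℝ (⊤ : ℕ∞) f) (i j : Fin 2)
    (x : Fin 2 → ℝ) : pd i (pd j f) x = pd j (pd i f) x := by
  have hd := fderiv_smooth hf
  have hsymm : IsSymmSndFDerivAt ℝ f x :=
    hf.contDiffAt.isSymmSndFDerivAt (by rw [minSmoothness_of_isRCLikeNormedField]; exact WithTop.coe_le_coe.mpr (le_top : (2 : ℕ∞) ≤ ⊤))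
  have key : ∀ u v : Fin 2 → ℝ, fderiv ℝ (fun y => fderiv ℝ f y v) x u
      = fderiv ℝ (fderiv ℝ f) x u v := by
    intro u v
    rw [fderiv_clm_apply (hd.differentiable (by simp) x)
      (differentiableAt_const v)]
    simp
  show fderiv ℝ (fun y => fderiv ℝ f y (Pi.single j 1)) x (Pi.single i 1)
      = fderiv ℝ (fun y => fderiv ℝ f y (Pi.single i 1)) x (Pi.single j 1)
  rw [key, key, hsymm]

/-- For every smooth `ϱ : ℝ² → ℝ`, the combination `Φ₁₁ + 2Φ₁₂` equals the explicit
vector field `X` with components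
`X¹ = −2ϱ_y ϱ_xy² + 2ϱ_y ϱ_xx ϱ_yy + ϱ_y² ϱ_xxy − 2ϱ_x ϱ_y ϱ_xyy + ϱ_x² ϱ_yyy`,
`X² = 2ϱ_x ϱ_xy² − 2ϱ_x ϱ_xx ϱ_yy − ϱ_y² ϱ_xxx + 2ϱ_x ϱ_y ϱ_xxy − ϱ_x² ϱ_xyy`;
this `X` is the trivializing vector field `X^{γ₃}_{2D}` of the tetrahedral flow
on `ℝ²`, up to the normalization constant `1/8`. -/
theorem trivializing_vector_field_2d
    (ϱ : (Fin 2 → ℝ) → ℝ) (hϱ : ContDiff ℝ (⊤ : ℕ∞) ϱ) :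
    ∀ x : Fin 2 → ℝ,
      Phi11 ϱ 0 x + 2 * Phi12 ϱ 0 x =
        -2 * pd 1 ϱ x * (pd 0 (pd 1 ϱ) x) ^ 2
          + 2 * pd 1 ϱ x * pd 0 (pd 0 ϱ) x * pd 1 (pd 1 ϱ) x
          + (pd 1 ϱ x) ^ 2 * pd 0 (pd 0 (pd 1 ϱ)) x
          - 2 * pd 0 ϱ x * pd 1 ϱ x * pd 0 (pd 1 (pd 1 ϱ)) x
          + (pd 0 ϱ x) ^ 2 * pd 1 (pd 1 (pd 1 ϱ)) x
      ∧ Phi11 ϱ 1 x + 2 * Phi12 ϱ 1 x =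
        2 * pd 0 ϱ x * (pd 0 (pd 1 ϱ) x) ^ 2
          - 2 * pd 0 ϱ x * pd 0 (pd 0 ϱ) x * pd 1 (pd 1 ϱ) x
          - (pd 1 ϱ x) ^ 2 * pd 0 (pd 0 (pd 0 ϱ)) x
          + 2 * pd 0 ϱ x * pd 1 ϱ x * pd 0 (pd 0 (pd 1 ϱ)) x
          - (pd 0 ϱ x) ^ 2 * pd 0 (pd 1 (pd 1 ϱ)) x := by
  intro x
  have h1 : pd 1 (pd 0 ϱ) = pd 0 (pd 1 ϱ) := funext (pd_comm hϱ 1 0)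
  have h2 : ∀ k : Fin 2, pd 1 (pd 0 (pd k ϱ)) x = pd 0 (pd 1 (pd k ϱ)) x :=
    fun k => pd_comm (pd_smooth hϱ k) 1 0 x
  constructor <;>
  · simp only [Phi11, Phi12, Fin.sum_univ_two, eps, h1, h2, Fin.val_zero, Fin.val_one,
      Nat.cast_zero, Nat.cast_one, Fin.isValue]
    norm_num
    ring
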